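/- arXiv:2208.02549 — 4 statements merged into one kernel-verified Lean document; each statement's English description precedes it below -/
import Mathlib

section
/- Let n ≥ 1, let g ∈ Sp(n, ℚ), and suppose d = diag(d₁, …, dₙ) and d' = diag(d'₁, …, d'ₙ) are two diagonal matrices with positive integer entries satisfying d₁ ∣ d₂ ∣ … ∣ dₙ and d'₁ ∣ d'₂ ∣ … ∣ d'ₙ such that both block matrices diag(d, d⁻¹) and diag(d', d'⁻¹) lie in the double coset Sp(n, ℤ) · g · Sp(n, ℤ). Then d = d'. In other words, the diagonal matrix in the symplectic Smith normal form of a rational symplectic matrix is unique. -/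
/-!
Multiplying by a common multiple `c` of all the `dᵢ` and `d'ᵢ` turns `diag(d, d⁻¹)` and
`diag(d', d'⁻¹)` into integer matrices, and since integral symplectic matrices have unit
determinant, the two are equivalent over `ℤ`. Divisibility of all `k × k` minors by a given
element is invariant under multiplication by unimodular matrices. Sorted as
`c/dₙ ∣ … ∣ c/d₁ ∣ c·d₁ ∣ … ∣ c·dₙ`, the diagonal entries form a divisibility chain, and for a
diagonal matrix with such a chain the elements dividing all `k × k` minors are exactly the
divisors of the product of the first `k` entries. So the two chains have the same partial
products, hence coincide, and `d = d'`.
-/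

open Matrix

noncomputable section

/-- The standard symplectic matrix `J = (0, 1ₙ; -1ₙ, 0)` of size `2n` over `R`. -/
def symplecticJ (n : ℕ) (R : Type*) [CommRing R] :
    Matrix (Fin n ⊕ Fin n) (Fin n ⊕ Fin n) R :=
  fromBlocks 0 1 (-1) 0

/-- `g` belongs to the symplectic group `Sp(n, R)`: `ᵗg J g = J`. -/
def IsSymplectic {n : ℕ} {R : Type*} [CommRing R]
    (g : Matrix (Fin n ⊕ Fin n) (Fin n ⊕ Fin n) R) : Prop :=
  gᵀ * symplecticJ n R * g = symplecticJ n R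

namespace Matrix

variable {R : Type*} [CommRing R] {l m n : Type*}

def MinorsDvd (a : R) (k : ℕ) (A : Matrix m n R) : Prop :=
  ∀ (f : Fin k → m) (g : Fin k → n), a ∣ (A.submatrix f g).det

variable {a : R} {k : ℕ}

theorem MinorsDvd.mul_left [Fintype m] {A : Matrix m n R} (hA : MinorsDvd a k A)
    (B : Matrix l m R) : MinorsDvd a k (B * A) := by
  intro f g
  -- each row of a minor of `B * A` is a combination of rows of `A`
  have hrows : (B * A).submatrix f g = fun i => ∑ t, B (f i) t • fun j => A t (g j) := by
    ext i j
    simp [mul_apply, Finset.sum_apply]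
  have hsum : detRowAlternating (fun i => ∑ t, B (f i) t • fun j => A t (g j)) =
      ∑ r : Fin k → m, detRowAlternating fun i => B (f i) (r i) • fun j => A (r i) (g j) :=
    (detRowAlternating (R := R) (n := Fin k)).toMultilinearMap.map_sum _
  change a ∣ detRowAlternating ((B * A).submatrix f g)
  rw [hrows, hsum]
  refine Finset.dvd_sum fun r _ => ?_
  have hsmul : detRowAlternating (fun i => B (f i) (r i) • fun j => A (r i) (g j)) =
      (∏ i, B (f i) (r i)) • detRowAlternating fun i j => A (r i) (g j) :=
    (detRowAlternating (R := R) (n := Fin k)).toMultilinearMap.map_smul_univ _ _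
  rw [hsmul, smul_eq_mul]
  exact (hA r g).mul_left _

theorem minorsDvd_transpose_iff {A : Matrix m n R} : MinorsDvd a k Aᵀ ↔ MinorsDvd a k A := by
  refine ⟨fun h f g => ?_, fun h f g => ?_⟩ <;>
  · rw [← det_transpose, transpose_submatrix]
    simpa using h g f

theorem MinorsDvd.mul_right [Fintype n] {A : Matrix m n R} (hA : MinorsDvd a k A)
    (B : Matrix n l R) : MinorsDvd a k (A * B) := by
  rw [← minorsDvd_transpose_iff, transpose_mul]
  exact (minorsDvd_transpose_iff.2 hA).mul_left _

theorem minorsDvd_submatrix_equiv_iff {m' n' : Type*} {A : Matrix m n R} (e₁ : m' ≃ m)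
    (e₂ : n' ≃ n) : MinorsDvd a k (A.submatrix e₁ e₂) ↔ MinorsDvd a k A := by
  refine ⟨fun h f g => ?_, fun h f g => h _ _⟩
  simpa [submatrix_submatrix, Function.comp_def] using h (e₁.symm ∘ f) (e₂.symm ∘ g)

theorem minorsDvd_mul_mul_iff [Fintype m] [Fintype n] [DecidableEq m] [DecidableEq n]
    {A : Matrix m n R} {U : Matrix m m R} {V : Matrix n n R} (hU : IsUnit U.det)
    (hV : IsUnit V.det) : MinorsDvd a k (U * A * V) ↔ MinorsDvd a k A := by
  refine ⟨fun h => ?_, fun h => (h.mul_left U).mul_right V⟩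
  have hA : A = U⁻¹ * (U * A * V) * V⁻¹ := by
    rw [Matrix.mul_assoc U, nonsing_inv_mul_cancel_left U _ hU, mul_nonsing_inv_cancel_right V _ hV]
  rw [hA]
  exact (h.mul_left _).mul_right _

end Matrix

theorem Fin.val_le_val_of_strictMono {k N : ℕ} {σ : Fin k → Fin N} (hσ : StrictMono σ)
    (i : Fin k) : (i : ℕ) ≤ σ i := by
  obtain ⟨i, hi⟩ := i
  induction i with
  | zero => exact Nat.zero_le _
  | succ i ih => exact (ih (by omega)).trans_lt (hσ (Fin.mk_lt_mk.2 i.lt_succ_self))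

section DivisibilityChain

variable {N : ℕ}

theorem prod_castLE_dvd_prod_of_injective {M : Type*} [CommMonoid M] {e : Fin N → M}
    (he : ∀ i j, i ≤ j → e i ∣ e j) {k : ℕ} (hk : k ≤ N) {f : Fin k → Fin N}
    (hf : Function.Injective f) : ∏ i, e (Fin.castLE hk i) ∣ ∏ i, e (f i) := by
  set S := Finset.univ.image f
  have hS : S.card = k := by simp [S, Finset.card_image_of_injective _ hf]
  -- enumerate the image of `f` increasingly: its `i`-th element is at least `i`
  set σ := S.orderEmbOfFin hS
  have hprod : ∏ i, e (f i) = ∏ i, e (σ i) :=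
    calc ∏ i, e (f i) = ∏ x ∈ S, e x := (Finset.prod_image fun a _ b _ h => hf h).symm
      _ = ∏ i, e (σ i) := by rw [← S.map_orderEmbOfFin_univ hS, Finset.prod_map]; rfl
  rw [hprod]
  exact Finset.prod_dvd_prod_of_dvd _ _ fun i _ =>
    he _ _ (Fin.val_le_val_of_strictMono σ.strictMono i)

variable {R : Type*} [CommRing R]

theorem Matrix.det_submatrix_diagonal (e : Fin N → R) {k : ℕ} (f g : Fin k → Fin N) :
    ((diagonal e).submatrix f g).det =
      (∏ i, e (f i)) * ((1 : Matrix (Fin N) (Fin N) R).submatrix f g).det := by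
  rw [← det_diagonal, ← det_mul]
  congr 1
  ext i j
  simp [diagonal_apply, Matrix.one_apply]

theorem Matrix.minorsDvd_diagonal_iff {e : Fin N → R} (he : ∀ i j, i ≤ j → e i ∣ e j)
    {a : R} {k : ℕ} (hk : k ≤ N) :
    MinorsDvd a k (diagonal e) ↔ a ∣ ∏ i, e (Fin.castLE hk i) := by
  refine ⟨fun h => ?_, fun h f g => ?_⟩
  · simpa [submatrix_diagonal _ _ (Fin.castLE_injective hk)] using
      h (Fin.castLE hk) (Fin.castLE hk)
  rw [det_submatrix_diagonal]
  by_cases hf : Function.Injective f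
  · exact (h.trans (prod_castLE_dvd_prod_of_injective he hk hf)).mul_right _
  · obtain ⟨i, j, hij, hne⟩ := Function.not_injective_iff.1 hf
    have hrow : (1 : Matrix (Fin N) (Fin N) R).submatrix f g i =
        (1 : Matrix (Fin N) (Fin N) R).submatrix f g j :=
      funext fun x => by rw [submatrix_apply, submatrix_apply, hij]
    rw [det_zero_of_row_eq hne hrow, mul_zero]
    exact dvd_zero a

theorem associated_of_forall_minorsDvd_diagonal_iff [IsDomain R] {e e' : Fin N → R}
    (he : ∀ i j, i ≤ j → e i ∣ e j) (he' : ∀ i j, i ≤ j → e' i ∣ e' j) (he'0 : ∀ i, e' i ≠ 0)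
    (h : ∀ a k, MinorsDvd a k (diagonal e) ↔ MinorsDvd a k (diagonal e')) (j : Fin N) :
    Associated (e j) (e' j) := by
  have hprefix : ∀ k (hk : k ≤ N),
      Associated (∏ i, e' (Fin.castLE hk i)) (∏ i, e (Fin.castLE hk i)) := fun k hk => by
    have hdvd : ∀ a, a ∣ ∏ i, e (Fin.castLE hk i) ↔ a ∣ ∏ i, e' (Fin.castLE hk i) := fun a =>
      (minorsDvd_diagonal_iff he hk).symm.trans ((h a k).trans (minorsDvd_diagonal_iff he' hk))
    exact associated_of_dvd_dvd ((hdvd _).2 dvd_rfl) ((hdvd _).1 dvd_rfl)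
  have hsucc : ∀ v : Fin N → R, ∏ i : Fin (j + 1), v (Fin.castLE j.isLt i) =
      (∏ i : Fin j, v (Fin.castLE j.isLt.le i)) * v j := fun v => by
    rw [Fin.prod_univ_castSucc]
    rfl
  have hj := hprefix (j + 1) j.isLt
  rw [hsucc, hsucc] at hj
  exact (hj.of_mul_left (hprefix j j.isLt.le)
    (Finset.prod_ne_zero_iff.2 fun i _ => he'0 _)).symm

end DivisibilityChain

theorem Int.ediv_dvd_ediv_of_dvd_of_dvd {a b c : ℤ} (hab : a ∣ b) (hbc : b ∣ c) :
    c / b ∣ c / a := by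
  obtain ⟨s, rfl⟩ := hab
  obtain ⟨t, rfl⟩ := hbc
  rcases eq_or_ne a 0 with rfl | ha
  · simp
  rcases eq_or_ne s 0 with rfl | hs
  · simp
  rw [Int.mul_ediv_cancel_left _ (mul_ne_zero ha hs), mul_assoc, Int.mul_ediv_cancel_left _ ha]
  exact dvd_mul_left t s

theorem IsSymplectic.isUnit_det {n : ℕ} {R : Type*} [CommRing R]
    {σ : Matrix (Fin n ⊕ Fin n) (Fin n ⊕ Fin n) R} (h : IsSymplectic σ) : IsUnit σ.det := by
  have hJ : symplecticJ n R = -J (Fin n) R := by simp [symplecticJ, J, fromBlocks_neg]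
  refine SymplecticGroup.symplectic_det (SymplecticGroup.mem_iff'.2 ?_)
  simpa [IsSymplectic, hJ] using h

theorem exists_isUnit_det_mul_mul_eq_of_map_eq {R S ι : Type*} [CommRing R] [CommRing S]
    [Fintype ι] [DecidableEq ι] {f : R →+* S} (hf : Function.Injective f)
    {A A' σ₁ σ₂ σ₃ σ₄ : Matrix ι ι R} {g : Matrix ι ι S} (hσ₁ : IsUnit σ₁.det)
    (hσ₂ : IsUnit σ₂.det) (hσ₃ : IsUnit σ₃.det) (hσ₄ : IsUnit σ₄.det)
    (h : A.map f = σ₁.map f * g * σ₂.map f) (h' : A'.map f = σ₃.map f * g * σ₄.map f) :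
    ∃ U V : Matrix ι ι R, IsUnit U.det ∧ IsUnit V.det ∧ A' = U * A * V := by
  refine ⟨σ₃ * σ₁⁻¹, σ₂⁻¹ * σ₄, ?_, ?_, ?_⟩
  · rw [det_mul]
    exact hσ₃.mul (isUnit_nonsing_inv_det σ₁ hσ₁)
  · rw [det_mul]
    exact (isUnit_nonsing_inv_det σ₂ hσ₂).mul hσ₄
  apply map_injective hf
  have h₁ : σ₁⁻¹.map f * σ₁.map f = 1 := by
    rw [← Matrix.map_mul, nonsing_inv_mul _ hσ₁, Matrix.map_one _ f.map_zero f.map_one]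
  have h₂ : σ₂.map f * σ₂⁻¹.map f = 1 := by
    rw [← Matrix.map_mul, mul_nonsing_inv _ hσ₂, Matrix.map_one _ f.map_zero f.map_one]
  calc A'.map f = σ₃.map f * (σ₁⁻¹.map f * σ₁.map f) * g * (σ₂.map f * σ₂⁻¹.map f) * σ₄.map f := by
        rw [h', h₁, h₂, Matrix.mul_one, Matrix.mul_one]
    _ = (σ₃ * σ₁⁻¹ * A * (σ₂⁻¹ * σ₄)).map f := by
        simp only [Matrix.map_mul, h, Matrix.mul_assoc]

section SymplecticChain

variable {n : ℕ}

/-- The diagonal entries of `c • diag(d, d⁻¹)`, ordered so that they form a divisibility chain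
when `d` is one and all `dᵢ` divide `c`. -/
def symplecticChain (c : ℤ) (d : Fin n → ℤ) : Fin (n + n) → ℤ :=
  Fin.append (fun i => c / d i.rev) fun i => c * d i

def finSumFinRevEquiv (n : ℕ) : Fin n ⊕ Fin n ≃ Fin (n + n) :=
  (Equiv.sumComm _ _).trans ((Equiv.sumCongr Fin.revPerm (Equiv.refl _)).trans finSumFinEquiv)

theorem symplecticChain_comp_finSumFinRevEquiv (c : ℤ) (d : Fin n → ℤ) :
    symplecticChain c d ∘ finSumFinRevEquiv n = Sum.elim (fun i => c * d i) fun i => c / d i := by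
  ext (i | i) <;> simp [symplecticChain, finSumFinRevEquiv, -Fin.natAdd_eq_addNat]

theorem map_submatrix_diagonal_symplecticChain {c : ℤ} {d : Fin n → ℤ} (hdc : ∀ i, d i ∣ c) :
    ((diagonal (symplecticChain c d)).submatrix (finSumFinRevEquiv n)
        (finSumFinRevEquiv n)).map (Int.cast : ℤ → ℚ) =
      (c : ℚ) • fromBlocks (diagonal fun i => (d i : ℚ)) 0 0 (diagonal fun i => (d i : ℚ)⁻¹) := by
  rw [submatrix_diagonal_equiv, symplecticChain_comp_finSumFinRevEquiv, fromBlocks_diagonal,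
    diagonal_map (by simp), ← diagonal_smul]
  congr 1
  ext (i | i) <;> simp [Int.cast_div_charZero (hdc i), div_eq_mul_inv]

theorem symplecticChain_dvd_of_le {c : ℤ} {d : Fin n → ℤ} (hd : ∀ i j, i ≤ j → d i ∣ d j)
    (hdc : ∀ i, d i ∣ c) (i j : Fin (n + n)) (hij : i ≤ j) :
    symplecticChain c d i ∣ symplecticChain c d j := by
  induction i using Fin.addCases <;> induction j using Fin.addCases
  · simp only [symplecticChain, Fin.append_left]
    exact Int.ediv_dvd_ediv_of_dvd_of_dvd (hd _ _ (Fin.rev_le_rev.2 hij)) (hdc _)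
  · simp only [symplecticChain, Fin.append_left, Fin.append_right]
    exact (Int.ediv_dvd_of_dvd (hdc _)).mul_right _
  · simp [Fin.le_def] at hij
    omega
  · simp only [symplecticChain, Fin.append_right]
    exact mul_dvd_mul_left c (hd _ _ ((Fin.natAdd_le_natAdd_iff n).1 hij))

theorem symplecticChain_pos {c : ℤ} {d : Fin n → ℤ} (hc : 0 < c) (hd : ∀ i, 0 < d i)
    (hdc : ∀ i, d i ∣ c) (i : Fin (n + n)) : 0 < symplecticChain c d i := by
  induction i using Fin.addCases
  · simpa [symplecticChain] using Int.ediv_pos_of_pos_of_dvd hc (hd _).le (hdc _)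
  · simp only [symplecticChain, Fin.append_right]
    exact mul_pos hc (hd _)

end SymplecticChain

theorem symplectic_smith_normal_form_unique_general {n : ℕ}
    (g : Matrix (Fin n ⊕ Fin n) (Fin n ⊕ Fin n) ℚ)
    (d d' : Fin n → ℤ)
    (hdpos : ∀ i, 0 < d i) (hddvd : ∀ i j : Fin n, i ≤ j → d i ∣ d j)
    (hd'pos : ∀ i, 0 < d' i) (hd'dvd : ∀ i j : Fin n, i ≤ j → d' i ∣ d' j)
    (hd : ∃ σ σ' : Matrix (Fin n ⊕ Fin n) (Fin n ⊕ Fin n) ℤ,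
      IsSymplectic σ ∧ IsSymplectic σ' ∧
      fromBlocks (diagonal fun i => (d i : ℚ)) 0 0 (diagonal fun i => (d i : ℚ)⁻¹) =
        σ.map (Int.cast : ℤ → ℚ) * g * σ'.map (Int.cast : ℤ → ℚ))
    (hd' : ∃ σ σ' : Matrix (Fin n ⊕ Fin n) (Fin n ⊕ Fin n) ℤ,
      IsSymplectic σ ∧ IsSymplectic σ' ∧
      fromBlocks (diagonal fun i => (d' i : ℚ)) 0 0 (diagonal fun i => (d' i : ℚ)⁻¹) =
        σ.map (Int.cast : ℤ → ℚ) * g * σ'.map (Int.cast : ℤ → ℚ)) :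
    d = d' := by
  obtain ⟨σ₁, σ₂, hσ₁, hσ₂, h⟩ := hd
  obtain ⟨σ₃, σ₄, hσ₃, hσ₄, h'⟩ := hd'
  set c := (∏ i, d i) * ∏ i, d' i
  have hc : 0 < c :=
    mul_pos (Finset.prod_pos fun i _ => hdpos i) (Finset.prod_pos fun i _ => hd'pos i)
  have hdc : ∀ i, d i ∣ c := fun i => (Finset.dvd_prod_of_mem d (Finset.mem_univ i)).mul_right _
  have hd'c : ∀ i, d' i ∣ c := fun i => (Finset.dvd_prod_of_mem d' (Finset.mem_univ i)).mul_left _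
  set ρ := finSumFinRevEquiv n
  obtain ⟨U, V, hU, hV, hUV⟩ := exists_isUnit_det_mul_mul_eq_of_map_eq (f := Int.castRingHom ℚ)
    Int.cast_injective (g := (c : ℚ) • g) hσ₁.isUnit_det hσ₂.isUnit_det hσ₃.isUnit_det
    hσ₄.isUnit_det
    (by rw [Int.coe_castRingHom, map_submatrix_diagonal_symplecticChain hdc, h,
      Matrix.mul_smul, Matrix.smul_mul])
    (by rw [Int.coe_castRingHom, map_submatrix_diagonal_symplecticChain hd'c, h',
      Matrix.mul_smul, Matrix.smul_mul])
  have hminors : ∀ a k, MinorsDvd a k (diagonal (symplecticChain c d)) ↔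
      MinorsDvd a k (diagonal (symplecticChain c d')) := fun a k => by
    rw [← minorsDvd_submatrix_equiv_iff ρ ρ,
      ← minorsDvd_submatrix_equiv_iff (A := diagonal (symplecticChain c d')) ρ ρ, hUV,
      minorsDvd_mul_mul_iff hU hV]
  funext i
  have hentry := Int.eq_of_associated_of_nonneg (associated_of_forall_minorsDvd_diagonal_iff
    (symplecticChain_dvd_of_le hddvd hdc) (symplecticChain_dvd_of_le hd'dvd hd'c)
    (fun j => (symplecticChain_pos hc hd'pos hd'c j).ne') hminors (Fin.natAdd n i))
    (symplecticChain_pos hc hdpos hdc _).le (symplecticChain_pos hc hd'pos hd'c _).le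
  simpa only [symplecticChain, Fin.append_right, mul_right_inj' hc.ne'] using hentry

/-- **Uniqueness of the symplectic Smith normal form.** If two positive integral diagonal
matrices `d, d'` with `d₁ ∣ d₂ ∣ … ∣ dₙ` and `d'₁ ∣ d'₂ ∣ … ∣ d'ₙ` are such that both
`diag(d, d⁻¹)` and `diag(d', d'⁻¹)` lie in the double coset `Sp(n,ℤ) g Sp(n,ℤ)` of a rational
symplectic matrix `g`, then `d = d'`. -/
theorem symplectic_smith_normal_form_unique {n : ℕ} (hn : 1 ≤ n)
    (g : Matrix (Fin n ⊕ Fin n) (Fin n ⊕ Fin n) ℚ) (hg : IsSymplectic g)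
    (d d' : Fin n → ℤ)
    (hdpos : ∀ i, 0 < d i) (hddvd : ∀ i j : Fin n, i ≤ j → d i ∣ d j)
    (hd'pos : ∀ i, 0 < d' i) (hd'dvd : ∀ i j : Fin n, i ≤ j → d' i ∣ d' j)
    (hd : ∃ σ σ' : Matrix (Fin n ⊕ Fin n) (Fin n ⊕ Fin n) ℤ,
      IsSymplectic σ ∧ IsSymplectic σ' ∧
      fromBlocks (diagonal fun i => (d i : ℚ)) 0 0 (diagonal fun i => (d i : ℚ)⁻¹) =
        σ.map (Int.cast : ℤ → ℚ) * g * σ'.map (Int.cast : ℤ → ℚ))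
    (hd' : ∃ σ σ' : Matrix (Fin n ⊕ Fin n) (Fin n ⊕ Fin n) ℤ,
      IsSymplectic σ ∧ IsSymplectic σ' ∧
      fromBlocks (diagonal fun i => (d' i : ℚ)) 0 0 (diagonal fun i => (d' i : ℚ)⁻¹) =
        σ.map (Int.cast : ℤ → ℚ) * g * σ'.map (Int.cast : ℤ → ℚ)) :
    d = d' :=
  symplectic_smith_normal_form_unique_general g d d' hdpos hddvd hd'pos hd'dvd hd hd'
end
end

section
/- Let n ≥ 1. The group Sp(n, ℤ) acts transitively on the set of primitive vectors of ℤ^{2n}: for any primitive vector v ∈ ℤ^{2n} there exists σ ∈ Sp(n, ℤ) with σ v = e₁, where e₁ is the first standard basis vector. -/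
/-!
Every vector `(a, b)` is first moved to `(x, 0)` by a symplectic matrix acting in each plane
`(aᵢ, bᵢ)` through an element of `SL(2, ℤ)` that kills `bᵢ`. A primitive `v` has `c ⬝ v = 1` for
some `c` by Bézout, and since symplectic matrices are invertible, `d ⬝ x = 1` for some `d`. For such `x` and any `y` the
symmetric matrix `y dᵀ + d yᵀ - (y ⬝ x) d dᵀ` maps `x` to `y`, so the symplectic transvections
`(1, 0; S, 1)` and `(1, S; 0, 1)` with symmetric `S` carry `(x, 0)` to `(x, e₁)`, `(e₁, e₁)` and
finally `(e₁, 0)`.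
-/

open Matrix

noncomputable section

-- Mathlib's `J` is the negative of `symplecticJ`, which does not change the group.
lemma isSymplectic_iff_mem_symplecticGroup {n : ℕ} {R : Type*} [CommRing R]
    {g : Matrix (Fin n ⊕ Fin n) (Fin n ⊕ Fin n) R} :
    IsSymplectic g ↔ g ∈ symplecticGroup (Fin n) R := by
  have hJ : symplecticJ n R = -J (Fin n) R := by
    simp [symplecticJ, J, fromBlocks_neg]
  rw [IsSymplectic, SymplecticGroup.mem_iff', hJ, Matrix.mul_neg, Matrix.neg_mul, neg_inj]

lemma Int.exists_det_eq_one_and_mul_add_mul_eq_zero (x y : ℤ) :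
    ∃ p q r s : ℤ, p * s - q * r = 1 ∧ r * x + s * y = 0 := by
  rcases (Int.gcd x y).eq_zero_or_pos with h | h
  · obtain ⟨rfl, rfl⟩ := Int.gcd_eq_zero_iff.mp h
    exact ⟨1, 0, 0, 1, by ring, by ring⟩
  · obtain ⟨g, x', y', -, hxy', rfl, rfl⟩ := Int.exists_gcd_one' h
    obtain ⟨u, w, huw⟩ := Int.isCoprime_iff_gcd_eq_one.mpr hxy'
    exact ⟨u, w, -y', x', by linear_combination huw, by ring⟩

lemma Int.exists_dotProduct_eq_one_of_gcd_eq_one {ι : Type*} [Fintype ι] {v : ι → ℤ}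
    (hv : Finset.univ.gcd v = 1) : ∃ c, c ⬝ᵥ v = 1 := by
  obtain ⟨c, hc⟩ := Finset.gcd_eq_sum_mul Finset.univ v
  exact ⟨c, by rw [dotProduct_comm, ← hv, hc]; rfl⟩

section

variable {l R : Type*} [Fintype l] [CommRing R]

lemma Matrix.exists_isSymm_mulVec_eq {d w : l → R} (hdw : d ⬝ᵥ w = 1) (y : l → R) :
    ∃ S : Matrix l l R, S.IsSymm ∧ S *ᵥ w = y := by
  refine ⟨vecMulVec y d + vecMulVec d y - (y ⬝ᵥ w) • vecMulVec d d, ?_, ?_⟩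
  · simp [IsSymm, transpose_sub, add_comm]
  · simp [sub_mulVec, add_mulVec, smul_mulVec, vecMulVec_mulVec, hdw]

variable [DecidableEq l]

namespace SymplecticGroup

lemma fromBlocks_diagonal_mem {p q r s : l → R} (h : ∀ i, p i * s i - q i * r i = 1) :
    fromBlocks (diagonal p) (diagonal q) (diagonal r) (diagonal s) ∈ symplecticGroup l R := by
  simp only [fromBlocks_mem_iff, diagonal_transpose, diagonal_mul_diagonal, diagonal_sub]
  refine ⟨by simp only [mul_comm], by simp only [mul_comm], ?_⟩
  rw [← diagonal_one]
  congr 1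
  funext i
  simpa [mul_comm] using h i

lemma fromBlocks_one_zero_mem {S : Matrix l l R} (hS : S.IsSymm) :
    fromBlocks 1 0 S 1 ∈ symplecticGroup l R := by
  simp [fromBlocks_mem_iff, hS.eq]

lemma fromBlocks_zero_one_mem {S : Matrix l l R} (hS : S.IsSymm) :
    fromBlocks 1 S 0 1 ∈ symplecticGroup l R := by
  simp [fromBlocks_mem_iff, hS.eq]

end SymplecticGroup

def SpMapsTo (v w : l ⊕ l → R) : Prop :=
  ∃ σ ∈ symplecticGroup l R, σ *ᵥ v = w

lemma SpMapsTo.trans {u v w : l ⊕ l → R} (huv : SpMapsTo u v) (hvw : SpMapsTo v w) :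
    SpMapsTo u w := by
  obtain ⟨σ, hσ, rfl⟩ := huv
  obtain ⟨τ, hτ, rfl⟩ := hvw
  exact ⟨τ * σ, Submonoid.mul_mem _ hτ hσ, (mulVec_mulVec _ _ _).symm⟩

-- `-(J σᵀ J)` is a left inverse of `σ`.
lemma SpMapsTo.exists_dotProduct_eq_one {v w : l ⊕ l → R} (hvw : SpMapsTo v w)
    {c : l ⊕ l → R} (hc : c ⬝ᵥ v = 1) : ∃ d, d ⬝ᵥ w = 1 := by
  obtain ⟨σ, hσ, rfl⟩ := hvw
  refine ⟨c ᵥ* -(J l R * σᵀ * J l R), ?_⟩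
  rw [← dotProduct_mulVec, mulVec_mulVec, Matrix.neg_mul, SymplecticGroup.inv_left_mul_aux hσ,
    one_mulVec, hc]

lemma spMapsTo_sumElim_fix_left {d x : l → R} (hd : d ⬝ᵥ x = 1) (y z : l → R) :
    SpMapsTo (Sum.elim x y) (Sum.elim x z) := by
  obtain ⟨S, hS, hSx⟩ := exists_isSymm_mulVec_eq hd (z - y)
  exact ⟨_, SymplecticGroup.fromBlocks_one_zero_mem hS, by simp [fromBlocks_mulVec, hSx]⟩

lemma spMapsTo_sumElim_fix_right {d y : l → R} (hd : d ⬝ᵥ y = 1) (x z : l → R) :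
    SpMapsTo (Sum.elim x y) (Sum.elim z y) := by
  obtain ⟨S, hS, hSy⟩ := exists_isSymm_mulVec_eq hd (z - x)
  exact ⟨_, SymplecticGroup.fromBlocks_zero_one_mem hS, by simp [fromBlocks_mulVec, hSy]⟩

lemma spMapsTo_sumElim_zero_single {d x : l → R} (hd : d ⬝ᵥ x = 1) (i : l) :
    SpMapsTo (Sum.elim x 0) (Pi.single (Sum.inl i) (1 : R)) := by
  set e : l → R := Pi.single i 1
  have he : e ⬝ᵥ e = 1 := by simp [e]
  have hsingle : (Pi.single (Sum.inl i) 1 : l ⊕ l → R) = Sum.elim e 0 := by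
    ext (j | j) <;> simp [e, Pi.single_apply]
  rw [hsingle]
  exact ((spMapsTo_sumElim_fix_left hd 0 e).trans (spMapsTo_sumElim_fix_right he x e)).trans
    (spMapsTo_sumElim_fix_left he e 0)

lemma exists_spMapsTo_sumElim_zero (v : l ⊕ l → ℤ) : ∃ x, SpMapsTo v (Sum.elim x 0) := by
  choose p q r s hdet hzero using
    fun i ↦ Int.exists_det_eq_one_and_mul_add_mul_eq_zero (v (Sum.inl i)) (v (Sum.inr i))
  refine ⟨fun i ↦ p i * v (Sum.inl i) + q i * v (Sum.inr i), _,
    SymplecticGroup.fromBlocks_diagonal_mem hdet, ?_⟩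
  rw [← Sum.elim_comp_inl_inr v, fromBlocks_mulVec]
  ext (i | i) <;> simp [mulVec_diagonal, hzero]

end

theorem sp_transitive_on_primitive_vectors_general {n : ℕ} (hn : 1 ≤ n)
    (v : Fin n ⊕ Fin n → ℤ) (hv : Finset.univ.gcd v = 1) :
    ∃ σ : Matrix (Fin n ⊕ Fin n) (Fin n ⊕ Fin n) ℤ,
      IsSymplectic σ ∧ σ.mulVec v = Pi.single (Sum.inl ⟨0, hn⟩) 1 := by
  obtain ⟨c, hc⟩ := Int.exists_dotProduct_eq_one_of_gcd_eq_one hv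
  obtain ⟨x, hvx⟩ := exists_spMapsTo_sumElim_zero v
  obtain ⟨d, hd⟩ := hvx.exists_dotProduct_eq_one hc
  rw [← Sum.elim_comp_inl_inr d, sumElim_dotProduct_sumElim, dotProduct_zero, add_zero] at hd
  obtain ⟨σ, hσ, hσv⟩ := hvx.trans (spMapsTo_sumElim_zero_single hd ⟨0, hn⟩)
  exact ⟨σ, isSymplectic_iff_mem_symplecticGroup.mpr hσ, hσv⟩

/-- **`Sp(n, ℤ)` acts transitively on primitive vectors of `ℤ^{2n}`.**
For any primitive vector `v` (nonzero, with coordinates of gcd `1`) there is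
`σ ∈ Sp(n, ℤ)` with `σ v = e₁`. -/
theorem sp_transitive_on_primitive_vectors {n : ℕ} (hn : 1 ≤ n)
    (v : Fin n ⊕ Fin n → ℤ) (hv0 : v ≠ 0) (hv : Finset.univ.gcd v = 1) :
    ∃ σ : Matrix (Fin n ⊕ Fin n) (Fin n ⊕ Fin n) ℤ,
      IsSymplectic σ ∧ σ.mulVec v = Pi.single (Sum.inl ⟨0, hn⟩) 1 :=
  sp_transitive_on_primitive_vectors_general hn v hv

end
end

section
/- Let g be a k×k integral matrix whose coefficients have greatest common divisor equal to 1. Then there exists a primitive vector v ∈ ℤ^k such that gv is also a primitive vector of ℤ^k. -/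
open Matrix

/-!
Write the content of a vector for the gcd of its coordinates. A Smith basis of the image
lattice `N = g ℤ^k` consists of vectors `a i • b (f i)` with `b` a basis of `ℤ^k`; the vector
`x = ∑ i, a i • b (f i) ∈ N` has `b`-coordinates `a i`, so its content divides every `a i` and
hence every coordinate of every vector of `N`, in particular every entry of `g`. Thus `x` is
primitive, and so is any `v` with `g v = x`, because the content of `v` divides that of `g v`.
-/

section

variable {R ι : Type*} [CommRing R] [NormalizedGCDMonoid R] [Fintype ι]

theorem Finset.univ_gcd_dvd_apply (φ : (ι → R) →ₗ[R] R) (y : ι → R) :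
    Finset.univ.gcd y ∣ φ y := by
  classical
  rw [LinearMap.pi_apply_eq_sum_univ φ y]
  exact Finset.dvd_sum fun p _ => (Finset.gcd_dvd (Finset.mem_univ p)).mul_right _

theorem Matrix.univ_gcd_dvd_univ_gcd_mulVec {m : Type*} [Fintype m] (A : Matrix m ι R)
    (v : ι → R) : Finset.univ.gcd v ∣ Finset.univ.gcd (A *ᵥ v) :=
  Finset.dvd_gcd fun i _ => Finset.univ_gcd_dvd_apply ((LinearMap.proj i).comp A.mulVecLin) v

theorem Finset.gcd_eq_one_of_dvd_one {β : Type*} {s : Finset β} {f : β → R}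
    (h : s.gcd f ∣ 1) : s.gcd f = 1 := by
  rw [← Finset.normalize_gcd, normalize_eq_one]
  exact isUnit_of_dvd_one h

theorem ne_zero_of_univ_gcd_eq_one [Nontrivial R] {v : ι → R} (h : Finset.univ.gcd v = 1) :
    v ≠ 0 := by
  rintro rfl
  simp [Finset.gcd_eq_zero_iff.mpr] at h

variable [IsDomain R] [IsPrincipalIdealRing R]

theorem Submodule.exists_mem_forall_univ_gcd_dvd (N : Submodule R (ι → R)) :
    ∃ x ∈ N, ∀ y ∈ N, ∀ p, Finset.univ.gcd x ∣ y p := by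
  obtain ⟨n, snf⟩ := N.smithNormalForm (Pi.basisFun R ι)
  set x : N := ∑ i, snf.bN i
  have hxa : ∀ i, Finset.univ.gcd (x : ι → R) ∣ snf.a i := fun i => by
    simpa [x] using Finset.univ_gcd_dvd_apply (snf.bM.coord (snf.f i)) x
  refine ⟨x, x.2, fun y hy p => ?_⟩
  rw [show y = ((⟨y, hy⟩ : N) : ι → R) from rfl, ← snf.bN.sum_repr ⟨y, hy⟩]
  simp only [Submodule.coe_sum, Submodule.coe_smul, snf.snf, Finset.sum_apply, Pi.smul_apply,
    smul_eq_mul]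
  exact Finset.dvd_sum fun i _ => ((hxa i).mul_right _).mul_left _

end

/-- If the coefficients of an integral `k × k` matrix `g` have gcd `1`, then there is a
primitive vector `v ∈ ℤ^k` (nonzero, coordinates of gcd `1`) such that `g v` is also
primitive. -/
theorem exists_primitive_vector_map_primitive {k : ℕ}
    (g : Matrix (Fin k) (Fin k) ℤ)
    (hg : (Finset.univ : Finset (Fin k × Fin k)).gcd (fun p => g p.1 p.2) = 1) :
    ∃ v : Fin k → ℤ, v ≠ 0 ∧ Finset.univ.gcd v = 1 ∧
      g.mulVec v ≠ 0 ∧ Finset.univ.gcd (g.mulVec v) = 1 := by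
  obtain ⟨_, ⟨v, rfl⟩, hdvd⟩ := (LinearMap.range g.mulVecLin).exists_mem_forall_univ_gcd_dvd
  have hgv : Finset.univ.gcd (g *ᵥ v) = 1 := by
    refine Finset.gcd_eq_one_of_dvd_one (hg ▸ Finset.dvd_gcd fun p _ => ?_)
    simpa [mulVec_single_one] using hdvd _ ⟨Pi.single p.2 1, rfl⟩ p.1
  have hv : Finset.univ.gcd v = 1 :=
    Finset.gcd_eq_one_of_dvd_one (hgv ▸ g.univ_gcd_dvd_univ_gcd_mulVec v)
  exact ⟨v, ne_zero_of_univ_gcd_eq_one hv, hv, ne_zero_of_univ_gcd_eq_one hgv, hgv⟩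
end

section
/- Let n ≥ 1. The group Sp(n, ℤ), embedded diagonally, is dense in the compact group Sp(n, ẑ), where ẑ = ∏_p ℤ_p is the profinite completion of ℤ (the product over all primes p of the rings ℤ_p with the product topology). -/
open Matrix

noncomputable section

instance (p : Nat.Primes) : Fact (p : ℕ).Prime := ⟨p.2⟩

/-- The profinite completion `ẑ = ∏_p ℤ_p` of `ℤ`, as the product over all primes of the
rings of `p`-adic integers, with the product topology. -/
abbrev ZHat : Type := (p : Nat.Primes) → ℤ_[(p : ℕ)]

/-- The diagonal embedding `ℤ → ẑ`. -/
def intToZHat (m : ℤ) : ZHat := fun p => (m : ℤ_[(p : ℕ)])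

/-!
Reduction modulo `p ^ k` at the primes `p` of a finite set `S` maps `Sp(n, ẑ)` to `Sp(n, R)` with
`R = ∏_{p ∈ S} ℤ/p^k`, and a sequence converges in `ẑ` as soon as, at every prime `p`, it agrees
with its limit modulo `p ^ m` for all large `m`; so it suffices that `Sp(n, ℤ) → Sp(n, R)` is
onto. The ring `R`, a product of local rings, has stable rank one, and over such a ring every
symplectic matrix is a product of symplectic transvections `x ↦ x + c ω(x, u) u`: one index `j`
at a time, two transvections move `C eⱼ` to `eⱼ` and two more, fixing `eⱼ`, move the new image
of `fⱼ` to `fⱼ`, all of them fixing the hyperbolic pairs `(eᵢ, fᵢ)` already treated.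
Transvections lift along the surjection `ℤ → R` given by the Chinese remainder theorem.
-/

class HasStableRankOne (R : Type*) [CommRing R] : Prop where
  exists_isUnit_add_mul {a b : R} : IsCoprime a b → ∃ t, IsUnit (a + t * b)

instance IsLocalRing.hasStableRankOne {R : Type*} [CommRing R] [IsLocalRing R] :
    HasStableRankOne R where
  exists_isUnit_add_mul := by
    rintro a b ⟨x, y, hxy⟩
    rcases IsLocalRing.isUnit_or_isUnit_of_isUnit_add (hxy ▸ isUnit_one) with ha | hb
    · exact ⟨0, by simpa using isUnit_of_mul_isUnit_right ha⟩
    · obtain ⟨u, hu⟩ := isUnit_of_mul_isUnit_right hb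
      refine ⟨↑u⁻¹ * (1 - a), ?_⟩
      rw [← hu, mul_assoc, mul_comm _ (u : R), Units.inv_mul_cancel_left, add_sub_cancel]
      exact isUnit_one

instance Pi.hasStableRankOne {ι : Type*} {R : ι → Type*} [∀ i, CommRing (R i)]
    [∀ i, HasStableRankOne (R i)] : HasStableRankOne (∀ i, R i) where
  exists_isUnit_add_mul {a b} hab := by
    choose t ht using fun i =>
      HasStableRankOne.exists_isUnit_add_mul (hab.map (Pi.evalRingHom R i))
    exact ⟨t, Pi.isUnit_iff.2 ht⟩

instance ZMod.hasStableRankOne_prime_pow (p k : ℕ) [Fact p.Prime] :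
    HasStableRankOne (ZMod (p ^ k)) := by
  rcases Nat.eq_zero_or_pos k with rfl | hk
  · have : Subsingleton (ZMod (p ^ 0)) := ZMod.subsingleton_iff.2 (pow_zero p)
    exact ⟨fun _ => ⟨0, isUnit_of_subsingleton _⟩⟩
  · have : Nontrivial (ZMod (p ^ k)) :=
      ZMod.nontrivial_iff.2 (Nat.one_lt_pow hk.ne' (Fact.out : p.Prime).one_lt).ne'
    have := IsLocalRing.of_surjective' (PadicInt.toZModPow (p := p) k) (ZMod.ringHom_surjective _)
    infer_instance

section Symplectic

variable {n : ℕ} {R S : Type*} [CommRing R] [CommRing S]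

def sympForm (n : ℕ) (R : Type*) [CommRing R] : LinearMap.BilinForm R (Fin n ⊕ Fin n → R) :=
  Matrix.toBilin' (symplecticJ n R)

local notation "ω" => sympForm _ _

lemma sympForm_single (a b : Fin n ⊕ Fin n) :
    ω (Pi.single a 1) (Pi.single b 1) = symplecticJ n R a b :=
  Matrix.toBilin'_single _ a b

lemma sympForm_apply (x y : Fin n ⊕ Fin n → R) :
    ω x y = ∑ i, (x (.inl i) * y (.inr i) - x (.inr i) * y (.inl i)) := by
  simp [sympForm, Matrix.toBilin'_apply', symplecticJ, mulVec, dotProduct,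
    Fintype.sum_sum_type, one_apply, mul_comm, sub_eq_add_neg, Finset.sum_add_distrib]

lemma sympForm_isAlt : (sympForm n R).IsAlt := fun x => by
  simp [sympForm_apply, mul_comm]

lemma sympForm_swap (x y : Fin n ⊕ Fin n → R) : ω y x = -ω x y :=
  (sympForm_isAlt.neg_eq x y).symm

lemma isSymplectic_iff_sympForm {g : Matrix (Fin n ⊕ Fin n) (Fin n ⊕ Fin n) R} :
    IsSymplectic g ↔ ∀ x y, ω (g *ᵥ x) (g *ᵥ y) = ω x y := by
  rw [IsSymplectic, ← Matrix.toBilin'.injective.eq_iff, ← Matrix.toBilin'_comp,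
    LinearMap.BilinForm.ext_iff]
  rfl

lemma IsSymplectic.mul {g h : Matrix (Fin n ⊕ Fin n) (Fin n ⊕ Fin n) R}
    (hg : IsSymplectic g) (hh : IsSymplectic h) : IsSymplectic (g * h) := by
  rw [isSymplectic_iff_sympForm] at *
  intro x y
  rw [← mulVec_mulVec, ← mulVec_mulVec, hg, hh]

lemma symplecticJ_map (f : R →+* S) : (symplecticJ n R).map f = symplecticJ n S := by
  simp [symplecticJ, Matrix.fromBlocks_map, Matrix.map_neg]

lemma IsSymplectic.map {g : Matrix (Fin n ⊕ Fin n) (Fin n ⊕ Fin n) R} (hg : IsSymplectic g)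
    (f : R →+* S) : IsSymplectic (g.map f) := by
  rw [IsSymplectic, ← transpose_map, ← symplecticJ_map f, ← Matrix.map_mul, ← Matrix.map_mul,
    hg]

def sympTransvection (u : Fin n ⊕ Fin n → R) (c : R) :
    Matrix (Fin n ⊕ Fin n) (Fin n ⊕ Fin n) R :=
  1 + c • vecMulVec u (symplecticJ n R *ᵥ u)

lemma sympTransvection_mulVec (u : Fin n ⊕ Fin n → R) (c : R) (x : Fin n ⊕ Fin n → R) :
    sympTransvection u c *ᵥ x = x + (c * ω x u) • u := by
  rw [sympTransvection, add_mulVec, one_mulVec, smul_mulVec, vecMulVec_mulVec, op_smul_eq_smul,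
    smul_smul, sympForm, Matrix.toBilin'_apply', dotProduct_comm]

lemma sympTransvection_map (f : R →+* S) (u : Fin n ⊕ Fin n → R) (c : R) :
    (sympTransvection u c).map f = sympTransvection (f ∘ u) (f c) := by
  ext i j
  simp [sympTransvection, vecMulVec_apply, RingHom.map_mulVec, one_apply, apply_ite f,
    ← symplecticJ_map f]

lemma isSymplectic_sympTransvection (u : Fin n ⊕ Fin n → R) (c : R) :
    IsSymplectic (sympTransvection u c) := by
  refine isSymplectic_iff_sympForm.2 fun x y => ?_
  simp only [sympTransvection_mulVec, map_add, map_smul, LinearMap.add_apply,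
    LinearMap.smul_apply, smul_eq_mul, sympForm_isAlt.self_eq_zero, sympForm_swap u]
  ring

lemma sympTransvection_neg_mul_self (u : Fin n ⊕ Fin n → R) (c : R) :
    sympTransvection u (-c) * sympTransvection u c = 1 := by
  refine ext_iff_mulVec.2 fun x => ?_
  simp only [← mulVec_mulVec, one_mulVec, sympTransvection_mulVec (x := x),
    sympTransvection_mulVec _ _ (x + _), map_add, map_smul, LinearMap.add_apply,
    LinearMap.smul_apply, smul_eq_mul, sympForm_isAlt.self_eq_zero]
  module

lemma sympTransvection_mulVec_of_sympForm_eq_zero {u x : Fin n ⊕ Fin n → R} (h : ω x u = 0)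
    (c : R) : sympTransvection u c *ᵥ x = x := by
  simp [sympTransvection_mulVec, h]

lemma exists_sympTransvection_sub_mulVec {x y : Fin n ⊕ Fin n → R} (h : IsUnit (ω x y)) :
    ∃ c, sympTransvection (y - x) c *ᵥ x = y := by
  refine ⟨↑h.unit⁻¹, ?_⟩
  rw [sympTransvection_mulVec, map_sub, sympForm_isAlt.self_eq_zero, sub_zero,
    IsUnit.val_inv_mul, one_smul, add_sub_cancel]

def sympPerp (X : Set (Fin n ⊕ Fin n → R)) : Submodule R (Fin n ⊕ Fin n → R) :=
  ⨅ x ∈ X, LinearMap.ker (ω x)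

lemma mem_sympPerp {X : Set (Fin n ⊕ Fin n → R)} {u : Fin n ⊕ Fin n → R} :
    u ∈ sympPerp X ↔ ∀ x ∈ X, ω x u = 0 := by
  simp [sympPerp]

lemma mem_sympPerp_insert {X : Set (Fin n ⊕ Fin n → R)} {x u : Fin n ⊕ Fin n → R} :
    u ∈ sympPerp (insert x X) ↔ ω x u = 0 ∧ u ∈ sympPerp X := by
  simp [mem_sympPerp]

lemma IsSymplectic.mulVec_mem_sympPerp {C : Matrix (Fin n ⊕ Fin n) (Fin n ⊕ Fin n) R}
    (hC : IsSymplectic C) {X : Set (Fin n ⊕ Fin n → R)} (hCX : ∀ x ∈ X, C *ᵥ x = x)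
    {y : Fin n ⊕ Fin n → R} (hy : y ∈ sympPerp X) : C *ᵥ y ∈ sympPerp X :=
  mem_sympPerp.2 fun x hx => by
    rw [← hCX x hx, isSymplectic_iff_sympForm.1 hC, mem_sympPerp.1 hy x hx]

def sympTransvections (X : Set (Fin n ⊕ Fin n → R)) :
    Submonoid (Matrix (Fin n ⊕ Fin n) (Fin n ⊕ Fin n) R) :=
  Submonoid.closure {g | ∃ u ∈ sympPerp X, ∃ c, sympTransvection u c = g}

lemma sympTransvection_mem_sympTransvections {X : Set (Fin n ⊕ Fin n → R)}
    {u : Fin n ⊕ Fin n → R} (hu : u ∈ sympPerp X) (c : R) :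
    sympTransvection u c ∈ sympTransvections X :=
  Submonoid.subset_closure ⟨u, hu, c, rfl⟩

lemma sympTransvections_anti {X Y : Set (Fin n ⊕ Fin n → R)} (hXY : X ⊆ Y) :
    sympTransvections Y ≤ sympTransvections X :=
  Submonoid.closure_mono fun _ ⟨u, hu, c, hg⟩ =>
    ⟨u, mem_sympPerp.2 fun x hx => mem_sympPerp.1 hu x (hXY hx), c, hg⟩

lemma mulVec_eq_self_of_mem_sympTransvections {X : Set (Fin n ⊕ Fin n → R)}
    {g : Matrix (Fin n ⊕ Fin n) (Fin n ⊕ Fin n) R} (hg : g ∈ sympTransvections X)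
    {x : Fin n ⊕ Fin n → R} (hx : x ∈ X) : g *ᵥ x = x := by
  induction hg using Submonoid.closure_induction with
  | mem g hg =>
    obtain ⟨u, hu, c, rfl⟩ := hg
    exact sympTransvection_mulVec_of_sympForm_eq_zero (mem_sympPerp.1 hu x hx) c
  | one => exact one_mulVec x
  | mul g h _ _ hgx hhx => rw [← mulVec_mulVec, hhx, hgx]

lemma isSymplectic_of_mem_sympTransvections {X : Set (Fin n ⊕ Fin n → R)}
    {g : Matrix (Fin n ⊕ Fin n) (Fin n ⊕ Fin n) R} (hg : g ∈ sympTransvections X) :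
    IsSymplectic g := by
  induction hg using Submonoid.closure_induction with
  | mem g hg =>
    obtain ⟨u, -, c, rfl⟩ := hg
    exact isSymplectic_sympTransvection u c
  | one => simp [IsSymplectic]
  | mul g h _ _ hg hh => exact hg.mul hh

lemma exists_mem_sympTransvections_mul_eq_one {X : Set (Fin n ⊕ Fin n → R)}
    {g : Matrix (Fin n ⊕ Fin n) (Fin n ⊕ Fin n) R} (hg : g ∈ sympTransvections X) :
    ∃ h ∈ sympTransvections X, h * g = 1 := by
  induction hg using Submonoid.closure_induction with
  | mem g hg =>
    obtain ⟨u, hu, c, rfl⟩ := hg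
    exact ⟨_, sympTransvection_mem_sympTransvections hu (-c),
      sympTransvection_neg_mul_self u c⟩
  | one => exact ⟨1, one_mem _, one_mul 1⟩
  | mul g h _ _ hg hh =>
    obtain ⟨g', hg', hg'g⟩ := hg
    obtain ⟨h', hh', hh'h⟩ := hh
    refine ⟨h' * g', mul_mem hh' hg', ?_⟩
    rw [mul_assoc, ← mul_assoc g', hg'g, one_mul, hh'h]

lemma mem_sympTransvections_of_mul_mem {X : Set (Fin n ⊕ Fin n → R)}
    {g C : Matrix (Fin n ⊕ Fin n) (Fin n ⊕ Fin n) R} (hg : g ∈ sympTransvections X)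
    (hgC : g * C ∈ sympTransvections X) : C ∈ sympTransvections X := by
  obtain ⟨h, hh, hhg⟩ := exists_mem_sympTransvections_mul_eq_one hg
  simpa [← mul_assoc, hhg] using mul_mem hh hgC

lemma exists_map_eq_of_mem_sympTransvections {f : R →+* S} (hf : Function.Surjective f)
    {g : Matrix (Fin n ⊕ Fin n) (Fin n ⊕ Fin n) S} (hg : g ∈ sympTransvections ∅) :
    ∃ γ ∈ sympTransvections ∅, γ.map f = g := by
  induction hg using Submonoid.closure_induction with
  | mem g hg =>
    obtain ⟨u, -, c, rfl⟩ := hg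
    obtain ⟨u', rfl⟩ := hf.comp_left u
    obtain ⟨c', rfl⟩ := hf c
    exact ⟨_, sympTransvection_mem_sympTransvections (by simp [mem_sympPerp]) c',
      sympTransvection_map f u' c'⟩
  | one => exact ⟨1, one_mem _, Matrix.map_one _ f.map_zero f.map_one⟩
  | mul g h _ _ hg hh =>
    obtain ⟨γ, hγ, rfl⟩ := hg
    obtain ⟨δ, hδ, rfl⟩ := hh
    exact ⟨γ * δ, mul_mem hγ hδ, Matrix.map_mul⟩

section Elimination

variable {X : Set (Fin n ⊕ Fin n → R)} {e f v w : Fin n ⊕ Fin n → R}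

lemma exists_isUnit_sympForm_sympTransvection_mulVec [HasStableRankOne R] (he : e ∈ sympPerp X)
    (hf : f ∈ sympPerp X) (hw : w ∈ sympPerp X) (hef : ω e f = 1) (hvw : ω v w = 1) :
    ∃ u ∈ sympPerp X, ∃ c, IsUnit (ω (sympTransvection u c *ᵥ v) e) := by
  -- `ω e z = 0`, and `(ω v f, ω v z)` is unimodular because `ω v w = 1`
  set z := w - ω e w • f
  have hcop : IsCoprime (ω v f) (ω v z) := ⟨ω e w, 1, by simp [z, hvw]⟩
  obtain ⟨t, ht⟩ := HasStableRankOne.exists_isUnit_add_mul hcop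
  have hz : z ∈ sympPerp X := sub_mem hw (Submodule.smul_mem _ _ hf)
  refine ⟨e + f + t • z, add_mem (add_mem he hf) (Submodule.smul_mem _ _ hz), 1, ?_⟩
  have hfe : ω f e = -1 := by rw [sympForm_swap, hef]
  have hω : ω (sympTransvection (e + f + t • z) 1 *ᵥ v) e = -(ω v f + t * ω v z) := by
    simp only [z, sympTransvection_mulVec, map_add, map_sub, map_smul, LinearMap.add_apply,
      LinearMap.sub_apply, LinearMap.smul_apply, smul_eq_mul, sympForm_isAlt.self_eq_zero, hfe,
      sympForm_swap e w]
    ring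
  rw [hω]
  exact ht.neg

lemma exists_mem_sympTransvections_mulVec_eq [HasStableRankOne R] (he : e ∈ sympPerp X)
    (hf : f ∈ sympPerp X) (hv : v ∈ sympPerp X) (hw : w ∈ sympPerp X) (hef : ω e f = 1)
    (hvw : ω v w = 1) :
    ∃ g ∈ sympTransvections X, g *ᵥ v = e := by
  obtain ⟨u, hu, c, hunit⟩ := exists_isUnit_sympForm_sympTransvection_mulVec he hf hw hef hvw
  set v' := sympTransvection u c *ᵥ v
  have hv' : v' ∈ sympPerp X := by
    rw [show v' = _ from sympTransvection_mulVec u c v]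
    exact add_mem hv (Submodule.smul_mem _ _ hu)
  obtain ⟨c', hc'⟩ := exists_sympTransvection_sub_mulVec hunit
  exact ⟨_, mul_mem (sympTransvection_mem_sympTransvections (sub_mem he hv') c')
    (sympTransvection_mem_sympTransvections hu c), by rw [← mulVec_mulVec, hc']⟩

lemma exists_mem_sympTransvections_insert_mulVec_eq (he : e ∈ sympPerp X) (hf : f ∈ sympPerp X)
    (hw : w ∈ sympPerp X) (hef : ω e f = 1) (hew : ω e w = 1) :
    ∃ g ∈ sympTransvections (insert e X), g *ᵥ w = f := by
  set w' := sympTransvection e (ω w f - 1) *ᵥ w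
  have hw'_eq : w' = w + ((ω w f - 1) * ω w e) • e := sympTransvection_mulVec _ _ _
  have hw'f : ω w' f = 1 := by
    simp only [hw'_eq, map_add, map_smul, LinearMap.add_apply, LinearMap.smul_apply,
      smul_eq_mul, sympForm_swap e w, hew, hef]
    ring
  have hew' : ω e w' = 1 := by
    simp [hw'_eq, sympForm_isAlt.self_eq_zero, hew]
  have hw' : w' ∈ sympPerp X := hw'_eq ▸ add_mem hw (Submodule.smul_mem _ _ he)
  obtain ⟨c, hc⟩ := exists_sympTransvection_sub_mulVec (hw'f ▸ isUnit_one)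
  refine ⟨_, mul_mem ?_ ?_, by rw [← mulVec_mulVec, hc]⟩
  · refine sympTransvection_mem_sympTransvections (mem_sympPerp_insert.2 ⟨?_, sub_mem hf hw'⟩) c
    rw [map_sub, hef, hew', sub_self]
  · exact sympTransvection_mem_sympTransvections
      (mem_sympPerp_insert.2 ⟨sympForm_isAlt.self_eq_zero e, he⟩) _

end Elimination

def hyperbolicPairs (s : Set (Fin n)) : Set (Fin n ⊕ Fin n → R) :=
  ⋃ i ∈ s, {Pi.single (.inl i) 1, Pi.single (.inr i) 1}

lemma single_mem_sympPerp_hyperbolicPairs {s : Set (Fin n)} {j : Fin n} (hj : j ∉ s)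
    {y : Fin n ⊕ Fin n} (hy : y = .inl j ∨ y = .inr j) :
    (Pi.single y 1 : Fin n ⊕ Fin n → R) ∈ sympPerp (hyperbolicPairs s) := by
  simp only [mem_sympPerp, hyperbolicPairs, Set.mem_iUnion, Set.mem_insert_iff,
    Set.mem_singleton_iff]
  rintro x ⟨i, hi, rfl | rfl⟩
  all_goals
    have hij : i ≠ j := fun h => hj (h ▸ hi)
    rcases hy with rfl | rfl <;> simp [sympForm_single, symplecticJ, hij]

lemma IsSymplectic.exists_mem_sympTransvections_fix_hyperbolicPairs_insert [HasStableRankOne R]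
    {C : Matrix (Fin n ⊕ Fin n) (Fin n ⊕ Fin n) R} (hC : IsSymplectic C) {s : Set (Fin n)}
    {j : Fin n} (hj : j ∉ s) (hCs : ∀ x ∈ hyperbolicPairs s, C *ᵥ x = x) :
    ∃ g ∈ sympTransvections ∅, ∀ x ∈ hyperbolicPairs (insert j s), (g * C) *ᵥ x = x := by
  set e : Fin n ⊕ Fin n → R := Pi.single (.inl j) 1
  set f : Fin n ⊕ Fin n → R := Pi.single (.inr j) 1
  have he : e ∈ sympPerp (hyperbolicPairs s) := single_mem_sympPerp_hyperbolicPairs hj (.inl rfl)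
  have hf : f ∈ sympPerp (hyperbolicPairs s) := single_mem_sympPerp_hyperbolicPairs hj (.inr rfl)
  have hef : ω e f = 1 := by simp [e, f, sympForm_single, symplecticJ]
  obtain ⟨g₁, hg₁, hg₁C⟩ := exists_mem_sympTransvections_mulVec_eq he hf
    (hC.mulVec_mem_sympPerp hCs he) (hC.mulVec_mem_sympPerp hCs hf) hef
    (by rw [isSymplectic_iff_sympForm.1 hC, hef])
  have hC₁ : IsSymplectic (g₁ * C) := (isSymplectic_of_mem_sympTransvections hg₁).mul hC
  have hC₁s : ∀ x ∈ hyperbolicPairs s, (g₁ * C) *ᵥ x = x := fun x hx => by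
    rw [← mulVec_mulVec, hCs x hx, mulVec_eq_self_of_mem_sympTransvections hg₁ hx]
  have hC₁e : (g₁ * C) *ᵥ e = e := by rw [← mulVec_mulVec, hg₁C]
  obtain ⟨g₂, hg₂, hg₂C⟩ := exists_mem_sympTransvections_insert_mulVec_eq he hf
    (hC₁.mulVec_mem_sympPerp hC₁s hf) hef
    (by conv_lhs => rw [← hC₁e]
        rw [isSymplectic_iff_sympForm.1 hC₁, hef])
  refine ⟨g₂ * g₁, mul_mem (sympTransvections_anti (Set.empty_subset _) hg₂)
    (sympTransvections_anti (Set.empty_subset _) hg₁), ?_⟩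
  have hpairs : hyperbolicPairs (insert j s) = insert e (insert f (hyperbolicPairs s)) := by
    simp [hyperbolicPairs, e, f, Set.insert_union]
  rw [hpairs]
  rintro x (rfl | rfl | hx) <;> rw [mul_assoc, ← mulVec_mulVec]
  · rw [hC₁e, mulVec_eq_self_of_mem_sympTransvections hg₂ (Set.mem_insert _ _)]
  · exact hg₂C
  · rw [hC₁s x hx, mulVec_eq_self_of_mem_sympTransvections hg₂ (Set.mem_insert_of_mem _ hx)]

theorem IsSymplectic.mem_sympTransvections [HasStableRankOne R]
    {C : Matrix (Fin n ⊕ Fin n) (Fin n ⊕ Fin n) R} (hC : IsSymplectic C) :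
    C ∈ sympTransvections ∅ := by
  suffices ∀ t : Finset (Fin n), ∀ C : Matrix (Fin n ⊕ Fin n) (Fin n ⊕ Fin n) R,
      IsSymplectic C → (∀ x ∈ hyperbolicPairs (↑t)ᶜ, C *ᵥ x = x) → C ∈ sympTransvections ∅ from
    this Finset.univ C hC (by simp [hyperbolicPairs])
  intro t
  induction t using Finset.induction_on with
  | empty =>
    intro C _ hCfix
    have hC1 : C = 1 := ext_of_mulVec_single fun y => by
      rw [one_mulVec]
      refine hCfix _ (Set.mem_biUnion (x := Sum.elim id id y) (by simp) ?_)
      cases y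
      · exact Set.mem_insert _ _
      · exact Set.mem_insert_of_mem _ rfl
    exact hC1 ▸ one_mem _
  | insert j t hj ih =>
    intro C hC hCfix
    obtain ⟨g, hg, hgC⟩ := hC.exists_mem_sympTransvections_fix_hyperbolicPairs_insert
      (s := (↑(insert j t))ᶜ) (j := j) (by simp) hCfix
    have hcompl : insert j (↑(insert j t))ᶜ = (↑t : Set (Fin n))ᶜ := by
      ext i
      by_cases h : i = j <;> simp [h, hj]
    rw [hcompl] at hgC
    exact mem_sympTransvections_of_mul_mem hg
      (ih _ ((isSymplectic_of_mem_sympTransvections hg).mul hC) hgC)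

theorem exists_isSymplectic_map_eq [HasStableRankOne S] {f : R →+* S}
    (hf : Function.Surjective f) {A : Matrix (Fin n ⊕ Fin n) (Fin n ⊕ Fin n) S}
    (hA : IsSymplectic A) : ∃ σ, IsSymplectic σ ∧ σ.map f = A := by
  obtain ⟨σ, hσ, rfl⟩ := exists_map_eq_of_mem_sympTransvections hf hA.mem_sympTransvections
  exact ⟨σ, isSymplectic_of_mem_sympTransvections hσ, rfl⟩

end Symplectic

open Filter Topology

lemma PadicInt.tendsto_of_eventually_toZModPow_eq {p : ℕ} [Fact p.Prime] {x : ℕ → ℤ_[p]}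
    {y : ℤ_[p]} (h : ∀ᶠ m in atTop, toZModPow m (x m) = toZModPow m y) :
    Tendsto x atTop (𝓝 y) := by
  have hbound : ∀ᶠ m in atTop, ‖x m - y‖ ≤ (p : ℝ)⁻¹ ^ m := h.mono fun m hm => by
    rw [inv_pow, ← zpow_natCast, ← _root_.zpow_neg, norm_le_pow_iff_mem_span_pow, ← ker_toZModPow,
      RingHom.mem_ker, map_sub, hm, sub_self]
  have hp : (p : ℝ)⁻¹ < 1 := inv_lt_one_of_one_lt₀ (mod_cast (Fact.out : p.Prime).one_lt)
  exact tendsto_sub_nhds_zero_iff.1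
    (squeeze_zero_norm' hbound (tendsto_pow_atTop_nhds_zero_of_lt_one (by positivity) hp))

lemma surjective_intCast_pi_zmod_pow (S : Finset Nat.Primes) (k : ℕ) :
    Function.Surjective (Int.castRingHom (∀ p : S, ZMod ((p : ℕ) ^ k))) := by
  have hcop : Pairwise (Function.onFun Nat.Coprime fun p : S => (p : ℕ) ^ k) := fun p q hpq =>
    Nat.Coprime.pow _ _ <| (Nat.coprime_primes p.1.2 q.1.2).2 fun h =>
      hpq (Subtype.ext (Subtype.ext h))
  let e := ZMod.prodEquivPi _ hcop
  rw [show Int.castRingHom _ = e.toRingHom.comp (Int.castRingHom _) from RingHom.ext_int _ _]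
  exact e.surjective.comp ZMod.intCast_surjective

def ZHat.toZModPow (S : Finset Nat.Primes) (k : ℕ) : ZHat →+* ∀ p : S, ZMod ((p : ℕ) ^ k) :=
  RingHom.pi fun p => (PadicInt.toZModPow k).comp (Pi.evalRingHom _ (p : Nat.Primes))

lemma exists_isSymplectic_int_toZModPow_eq {n : ℕ}
    {A : Matrix (Fin n ⊕ Fin n) (Fin n ⊕ Fin n) ZHat} (hA : IsSymplectic A)
    (S : Finset Nat.Primes) (k : ℕ) :
    ∃ σ : Matrix (Fin n ⊕ Fin n) (Fin n ⊕ Fin n) ℤ, IsSymplectic σ ∧ ∀ i j, ∀ p ∈ S,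
      PadicInt.toZModPow k (intToZHat (σ i j) p) = PadicInt.toZModPow k (A i j p) := by
  obtain ⟨σ, hσ, hσA⟩ :=
    exists_isSymplectic_map_eq (surjective_intCast_pi_zmod_pow S k) (hA.map (ZHat.toZModPow S k))
  refine ⟨σ, hσ, fun i j p hp => ?_⟩
  simpa [intToZHat, ZHat.toZModPow] using congr_fun (congr_fun (congr_fun hσA i) j) ⟨p, hp⟩

theorem sp_int_dense_in_sp_zhat_general {n : ℕ}
    (A : Matrix (Fin n ⊕ Fin n) (Fin n ⊕ Fin n) ZHat)
    (hA : IsSymplectic A) :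
    A ∈ closure {B : Matrix (Fin n ⊕ Fin n) (Fin n ⊕ Fin n) ZHat |
      ∃ σ : Matrix (Fin n ⊕ Fin n) (Fin n ⊕ Fin n) ℤ,
        IsSymplectic σ ∧ B = σ.map intToZHat} := by
  choose σ hσ hσA using fun m =>
    exists_isSymplectic_int_toZModPow_eq hA ((Finset.range m).subtype Nat.Prime) m
  refine mem_closure_of_tendsto (f := fun m => (σ m).map intToZHat) (b := atTop) ?_
    (Eventually.of_forall fun m => ⟨σ m, hσ m, rfl⟩)
  refine tendsto_pi_nhds.2 fun i => tendsto_pi_nhds.2 fun j => tendsto_pi_nhds.2 fun p => ?_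
  refine PadicInt.tendsto_of_eventually_toZModPow_eq ?_
  filter_upwards [eventually_gt_atTop (p : ℕ)] with m hm
  exact hσA m i j p (Finset.mem_subtype.2 (Finset.mem_range.2 hm))

/-- **`Sp(n, ℤ)` is dense in `Sp(n, ẑ)`** where `ẑ = ∏_p ℤ_p`: every symplectic matrix over
`ẑ` lies in the closure of the set of (diagonally embedded) integral symplectic matrices. -/
theorem sp_int_dense_in_sp_zhat {n : ℕ} (hn : 1 ≤ n)
    (A : Matrix (Fin n ⊕ Fin n) (Fin n ⊕ Fin n) ZHat)
    (hA : IsSymplectic A) :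
    A ∈ closure {B : Matrix (Fin n ⊕ Fin n) (Fin n ⊕ Fin n) ZHat |
      ∃ σ : Matrix (Fin n ⊕ Fin n) (Fin n ⊕ Fin n) ℤ,
        IsSymplectic σ ∧ B = σ.map intToZHat} :=
  sp_int_dense_in_sp_zhat_general A hA
end
end
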